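/- arXiv:2411.06728 — 6 statements merged into one kernel-verified Lean document; each statement's English description precedes it below -/
import Mathlib

section
/- For every continuously differentiable function f : [0,1] → ℝ and every ε > 0, there exist m ∈ ℕ and parameters w_j, b_j, λ_j ∈ ℝ (j = 1,…,m) such that (∫₀¹ (f(x) − Σ_{j=1}^{m} λ_j · max(0, w_j·x + b_j))² dx)^{1/2} < ε. That is, two-layer ReLU networks approximate every C¹ function on [0,1] to any desired accuracy in the L² distance. -/
/-!
A function continuous on `[a, b]` is uniformly approximated by its piecewise-linear interpolant on
a fine uniform grid. That interpolant is `f a` plus a combination of the ramps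
`max 0 (x - u) - max 0 (x - v)`, hence a two-layer ReLU network, and a uniform error `ε / 2` on
`[0, 1]` bounds the `L²` error by `ε / 2`.
-/

open Set Finset

def reluNeuron (p : ℝ × ℝ) (x : ℝ) : ℝ := max 0 (p.1 * x + p.2)

def reluNetworks : Submodule ℝ (ℝ → ℝ) := Submodule.span ℝ (range reluNeuron)

lemma reluNeuron_mem_reluNetworks (p : ℝ × ℝ) : reluNeuron p ∈ reluNetworks :=
  Submodule.subset_span (mem_range_self p)

lemma const_mem_reluNetworks (c : ℝ) : (fun _ => c) ∈ reluNetworks := by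
  have hconst : (fun _ : ℝ => c) = c • reluNeuron (0, 1) := by
    ext x
    simp [reluNeuron]
  rw [hconst]
  exact Submodule.smul_mem _ c (reluNeuron_mem_reluNetworks _)

lemma exists_params_of_mem_reluNetworks {g : ℝ → ℝ} (hg : g ∈ reluNetworks) :
    ∃ (m : ℕ) (w b lam : Fin m → ℝ), g = fun x => ∑ j, lam j * max 0 (w j * x + b j) := by
  obtain ⟨m, lam, neuron, rfl⟩ := Submodule.mem_span_set'.mp hg
  choose p hp using fun j => (neuron j).2
  refine ⟨m, fun j => (p j).1, fun j => (p j).2, lam, ?_⟩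
  ext x
  simp [← hp, reluNeuron]

def ramp (u v x : ℝ) : ℝ := max 0 (x - u) - max 0 (x - v)

lemma ramp_mem_reluNetworks (u v : ℝ) : ramp u v ∈ reluNetworks := by
  have hramp : ramp u v = reluNeuron (1, -u) - reluNeuron (1, -v) := by
    ext x
    simp [ramp, reluNeuron, sub_eq_add_neg]
  rw [hramp]
  exact sub_mem (reluNeuron_mem_reluNetworks _) (reluNeuron_mem_reluNetworks _)

section ramp

variable {u v x : ℝ}

lemma ramp_of_le_left (hxu : x ≤ u) (huv : u ≤ v) : ramp u v x = 0 := by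
  simp [ramp, *, sub_nonpos.mpr (hxu.trans huv)]

lemma ramp_of_mem_Icc (hx : x ∈ Icc u v) : ramp u v x = x - u := by
  simp [ramp, hx.1, hx.2]

lemma ramp_of_right_le (huv : u ≤ v) (hvx : v ≤ x) : ramp u v x = v - u := by
  simp [ramp, hvx, huv.trans hvx]

end ramp

noncomputable def piecewiseLinearInterpolant (f : ℝ → ℝ) (t : ℕ → ℝ) (n : ℕ) (x : ℝ) : ℝ :=
  f (t 0) + ∑ k ∈ range n, slope f (t k) (t (k + 1)) * ramp (t k) (t (k + 1)) x

section piecewiseLinearInterpolant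

variable {f : ℝ → ℝ} {t : ℕ → ℝ} {n : ℕ} {x : ℝ}

lemma piecewiseLinearInterpolant_mem_reluNetworks (f : ℝ → ℝ) (t : ℕ → ℝ) (n : ℕ) :
    piecewiseLinearInterpolant f t n ∈ reluNetworks := by
  have hsum : (fun x => ∑ k ∈ range n, slope f (t k) (t (k + 1)) * ramp (t k) (t (k + 1)) x) =
      ∑ k ∈ range n, slope f (t k) (t (k + 1)) • ramp (t k) (t (k + 1)) := by
    ext x
    simp [Finset.sum_apply]
  refine add_mem (const_mem_reluNetworks _) ?_
  rw [hsum]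
  exact sum_mem fun k _ => Submodule.smul_mem _ _ (ramp_mem_reluNetworks _ _)

lemma piecewiseLinearInterpolant_succ (f : ℝ → ℝ) (t : ℕ → ℝ) (n : ℕ) (x : ℝ) :
    piecewiseLinearInterpolant f t (n + 1) x = piecewiseLinearInterpolant f t n x +
      slope f (t n) (t (n + 1)) * ramp (t n) (t (n + 1)) x := by
  simp only [piecewiseLinearInterpolant, sum_range_succ, add_assoc]

lemma piecewiseLinearInterpolant_succ_of_le (ht : Monotone t) (hx : x ≤ t n) :
    piecewiseLinearInterpolant f t (n + 1) x = piecewiseLinearInterpolant f t n x := by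
  rw [piecewiseLinearInterpolant_succ, ramp_of_le_left hx (ht n.le_succ), mul_zero, add_zero]

lemma piecewiseLinearInterpolant_of_le (ht : Monotone t) (hx : t n ≤ x) :
    piecewiseLinearInterpolant f t n x = f (t n) := by
  induction n with
  | zero => simp [piecewiseLinearInterpolant]
  | succ n ih =>
    rw [piecewiseLinearInterpolant_succ, ih ((ht n.le_succ).trans hx),
      ramp_of_right_le (ht n.le_succ) hx, mul_comm, ← smul_eq_mul, sub_smul_slope, vsub_eq_sub,
      add_sub_cancel]

lemma piecewiseLinearInterpolant_of_mem_Icc (ht : Monotone t) (hx : x ∈ Icc (t n) (t (n + 1))) :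
    piecewiseLinearInterpolant f t (n + 1) x = f (t n) + slope f (t n) (t (n + 1)) * (x - t n) := by
  rw [piecewiseLinearInterpolant_succ, piecewiseLinearInterpolant_of_le ht hx.1,
    ramp_of_mem_Icc hx]

lemma abs_slope_mul_sub_le {u v : ℝ} (f : ℝ → ℝ) (hx : x ∈ Icc u v) :
    |slope f u v * (x - u)| ≤ |f v - f u| := by
  rcases hx.1.trans hx.2 |>.eq_or_lt with rfl | huv
  · simp
  rw [slope_def_field, abs_mul, abs_div, abs_of_pos (sub_pos.mpr huv),
    abs_of_nonneg (sub_nonneg.mpr hx.1), div_mul_eq_mul_div, mul_div_assoc]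
  exact mul_le_of_le_one_right (abs_nonneg _)
    ((div_le_one (sub_pos.mpr huv)).mpr (by linarith [hx.2]))

/-- On each cell the interpolant is affine and agrees with `f` at both ends, so its error is at
most twice the oscillation of `f` there. -/
theorem abs_sub_piecewiseLinearInterpolant_le {η : ℝ} (ht : Monotone t) (hη : 0 ≤ η)
    (hosc : ∀ k < n, ∀ x ∈ Icc (t k) (t (k + 1)), ∀ y ∈ Icc (t k) (t (k + 1)), |f x - f y| ≤ η) :
    ∀ x ∈ Icc (t 0) (t n), |f x - piecewiseLinearInterpolant f t n x| ≤ 2 * η := by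
  induction n with
  | zero =>
    rintro x ⟨hx₀, hx₁⟩
    rw [le_antisymm hx₁ hx₀, piecewiseLinearInterpolant_of_le ht le_rfl, sub_self, abs_zero]
    positivity
  | succ n ih =>
    rintro x ⟨hx₀, hx₁⟩
    rcases le_total x (t n) with hxn | hnx
    · rw [piecewiseLinearInterpolant_succ_of_le ht hxn]
      exact ih (fun k hk => hosc k (by omega)) x ⟨hx₀, hxn⟩
    have hcell : x ∈ Icc (t n) (t (n + 1)) := ⟨hnx, hx₁⟩
    have hleft := hosc n n.lt_succ_self x hcell (t n) ⟨le_rfl, ht n.le_succ⟩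
    have hright := hosc n n.lt_succ_self (t (n + 1)) ⟨ht n.le_succ, le_rfl⟩ (t n)
      ⟨le_rfl, ht n.le_succ⟩
    calc |f x - piecewiseLinearInterpolant f t (n + 1) x|
        = |(f x - f (t n)) - slope f (t n) (t (n + 1)) * (x - t n)| := by
          rw [piecewiseLinearInterpolant_of_mem_Icc ht hcell, sub_add_eq_sub_sub]
      _ ≤ |f x - f (t n)| + |f (t (n + 1)) - f (t n)| :=
          (abs_sub _ _).trans (add_le_add le_rfl (abs_slope_mul_sub_le f hcell))
      _ ≤ 2 * η := by linarith

end piecewiseLinearInterpolant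

theorem exists_mem_reluNetworks_abs_sub_le {f : ℝ → ℝ} {a b : ℝ} (hab : a ≤ b)
    (hf : ContinuousOn f (Icc a b)) {ε : ℝ} (hε : 0 < ε) :
    ∃ g ∈ reluNetworks, ∀ x ∈ Icc a b, |f x - g x| ≤ ε := by
  obtain ⟨δ, hδ, hfδ⟩ := Metric.uniformContinuousOn_iff.mp
    (isCompact_Icc.uniformContinuousOn_of_continuous hf) (ε / 2) (half_pos hε)
  obtain ⟨n, hn⟩ := exists_nat_gt ((b - a) / δ)
  have hn₀ : (0 : ℝ) < n := (div_nonneg (sub_nonneg.mpr hab) hδ.le).trans_lt hn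
  set h := (b - a) / n
  have hh : h < δ := (div_lt_comm₀ hn₀ hδ).mpr hn
  set t : ℕ → ℝ := fun k => a + k * h
  have ht : Monotone t := fun k l hkl => by
    simp only [t]
    gcongr
  have ht₀ : t 0 = a := by simp [t]
  have htn : t n = b := by simp only [t, h]; field_simp; ring
  refine ⟨piecewiseLinearInterpolant f t n, piecewiseLinearInterpolant_mem_reluNetworks f t n,
    fun x hx => ?_⟩
  rw [← ht₀, ← htn] at hx
  have hcell : ∀ k < n, Icc (t k) (t (k + 1)) ⊆ Icc a b := fun k hk => by
    rw [← ht₀, ← htn]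
    exact Icc_subset_Icc (ht k.zero_le) (ht hk)
  have hosc : ∀ k < n, ∀ x ∈ Icc (t k) (t (k + 1)), ∀ y ∈ Icc (t k) (t (k + 1)),
      |f x - f y| ≤ ε / 2 := by
    intro k hk x hx y hy
    have hxy : dist x y < δ :=
      (Real.dist_le_of_mem_Icc hx hy).trans_lt (by simpa [t, add_mul] using hh)
    exact (hfδ x (hcell k hk hx) y (hcell k hk hy) hxy).le
  exact (abs_sub_piecewiseLinearInterpolant_le ht (half_pos hε).le hosc x hx).trans_eq (by ring)

lemma sqrt_intervalIntegral_sq_le {g : ℝ → ℝ} {a b C : ℝ} (hC : 0 ≤ C)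
    (hg : ∀ x ∈ uIoc a b, |g x| ≤ C) : √(∫ x in a..b, g x ^ 2) ≤ C * √|b - a| := by
  have hint : ∫ x in a..b, g x ^ 2 ≤ C ^ 2 * |b - a| := by
    refine (Real.le_norm_self _).trans
      (intervalIntegral.norm_integral_le_of_norm_le_const fun x hx => ?_)
    rw [Real.norm_eq_abs, abs_pow]
    exact pow_le_pow_left₀ (abs_nonneg _) (hg x hx) 2
  calc √(∫ x in a..b, g x ^ 2) ≤ √(C ^ 2 * |b - a|) := Real.sqrt_le_sqrt hint
    _ = C * √|b - a| := by rw [Real.sqrt_mul (sq_nonneg C), Real.sqrt_sq hC]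

/-- Two-layer ReLU networks approximate every `C¹` function
on `[0,1]` to any desired accuracy in the `L²` distance. -/
theorem two_layer_relu_approximates_C1_univariate
    (f : ℝ → ℝ) (hf : ContDiffOn ℝ 1 f (Icc 0 1)) (ε : ℝ) (hε : 0 < ε) :
    ∃ (m : ℕ) (w b lam : Fin m → ℝ),
      Real.sqrt (∫ x in (0:ℝ)..1,
        (f x - ∑ j, lam j * max 0 (w j * x + b j)) ^ 2) < ε := by
  obtain ⟨g, hg, hfg⟩ :=
    exists_mem_reluNetworks_abs_sub_le zero_le_one hf.continuousOn (half_pos hε)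
  obtain ⟨m, w, b, lam, rfl⟩ := exists_params_of_mem_reluNetworks hg
  refine ⟨m, w, b, lam, ?_⟩
  calc √(∫ x in (0:ℝ)..1, (f x - ∑ j, lam j * max 0 (w j * x + b j)) ^ 2)
      ≤ ε / 2 * √|1 - 0| :=
        sqrt_intervalIntegral_sq_le (half_pos hε).le fun x hx =>
          hfg x (Ioc_subset_Icc_self (by simpa using hx))
    _ < ε := by norm_num [hε]
end

section
/- Let n ≥ 1 and let N : ℝⁿ → ℝ be given by N(x) = Σ_{i=1}^{m} λ_i · max(0, g_i(x)), where g_i(x) = ⟨w_i, x⟩ + b_i. Let R, R′ ⊆ ℝⁿ be sets with nonempty interior, and let k ∈ {1,…,m} satisfy: R ⊆ {x : g_k(x) ≥ 0}, R′ ⊆ {x : g_k(x) ≤ 0}, and for every i ≠ k, either R ∪ R′ ⊆ {x : g_i(x) ≥ 0} or R ∪ R′ ⊆ {x : g_i(x) ≤ 0}. If s and s′ are affine functions on ℝⁿ with N = s on R and N = s′ on R′, then s(x) = s′(x) + λ_k · (⟨w_k, x⟩ + b_k) for all x ∈ ℝⁿ. -/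
/-!
On `R ∪ R'` every unit other than the `k`-th has a fixed sign. With `P` the units other than `k`
that are nonnegative there, the network agrees with the affine function `∑_{i ∈ P ∪ {k}} λᵢ gᵢ`
on `R` and with `∑_{i ∈ P} λᵢ gᵢ` on `R'`. An affine function is determined by its values on a
set with nonempty interior, so these two functions are `s` and `s'`.
-/

open Set

def IsAffineFn {n : ℕ} (s : (Fin n → ℝ) → ℝ) : Prop :=
  ∃ (a : Fin n → ℝ) (c : ℝ), ∀ x, s x = (∑ i, a i * x i) + c

open Filter Topology

namespace IsAffineFn

variable {n : ℕ} {f g : (Fin n → ℝ) → ℝ}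

theorem sub (hf : IsAffineFn f) (hg : IsAffineFn g) : IsAffineFn (f - g) := by
  obtain ⟨a, c, hf⟩ := hf
  obtain ⟨a', c', hg⟩ := hg
  refine ⟨a - a', c - c', fun x => ?_⟩
  simp only [Pi.sub_apply, hf, hg, sub_mul, Finset.sum_sub_distrib]
  ring

theorem apply_add_smul_sub (hf : IsAffineFn f) (x y : Fin n → ℝ) (t : ℝ) :
    f (x + t • (y - x)) = f x + t * (f y - f x) := by
  obtain ⟨a, c, hf⟩ := hf
  simp only [hf, Pi.add_apply, Pi.smul_apply, Pi.sub_apply, smul_eq_mul, mul_add, mul_sub,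
    mul_left_comm _ t, Finset.sum_add_distrib, Finset.sum_sub_distrib, ← Finset.mul_sum]
  ring

theorem eq_zero_of_eventuallyEq_zero (hf : IsAffineFn f) {x₀ : Fin n → ℝ}
    (h : f =ᶠ[𝓝 x₀] 0) : f = 0 := by
  -- `f` is affine along the segment from `x₀` to `y` and vanishes near `t = 0`, so also at `t = 1`.
  funext y
  have hline : Tendsto (fun t : ℝ => x₀ + t • (y - x₀)) (𝓝[>] 0) (𝓝 x₀) := by
    have : Continuous fun t : ℝ => x₀ + t • (y - x₀) := by fun_prop
    simpa using (this.tendsto 0).mono_left nhdsWithin_le_nhds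
  obtain ⟨t, ht, ht0⟩ := ((hline.eventually h).and self_mem_nhdsWithin).exists
  have hx₀ : f x₀ = 0 := h.self_of_nhds
  rw [Pi.zero_apply, hf.apply_add_smul_sub, hx₀] at ht
  simpa [ne_of_gt ht0] using ht

theorem eq_of_eqOn_of_nonempty_interior (hf : IsAffineFn f) (hg : IsAffineFn g)
    {R : Set (Fin n → ℝ)} (hR : (interior R).Nonempty) (h : EqOn f g R) : f = g := by
  obtain ⟨x₀, hx₀⟩ := hR
  have : f - g =ᶠ[𝓝 x₀] 0 :=
    Filter.mem_of_superset (mem_interior_iff_mem_nhds.1 hx₀) fun x hx => sub_eq_zero.2 (h hx)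
  exact sub_eq_zero.1 ((hf.sub hg).eq_zero_of_eventuallyEq_zero this)

end IsAffineFn

theorem isAffineFn_sum_mul {ι : Type*} {n : ℕ} (T : Finset ι) (c : ι → ℝ)
    (w : ι → Fin n → ℝ) (b : ι → ℝ) :
    IsAffineFn fun x => ∑ i ∈ T, c i * ((∑ j, w i j * x j) + b i) := by
  refine ⟨fun j => ∑ i ∈ T, c i * w i j, ∑ i ∈ T, c i * b i, fun x => ?_⟩
  simp only [mul_add, Finset.mul_sum, Finset.sum_add_distrib, Finset.sum_mul]
  rw [Finset.sum_comm]
  ring_nf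

theorem sum_mul_max_zero_eq_sum_of_sign_pattern {ι X : Type*} [Fintype ι]
    (lam : ι → ℝ) (g : ι → X → ℝ) {S : Set X} (P : Finset ι)
    (hpos : ∀ i ∈ P, ∀ x ∈ S, 0 ≤ g i x) (hneg : ∀ i ∉ P, ∀ x ∈ S, g i x ≤ 0) :
    ∀ x ∈ S, ∑ i, lam i * max 0 (g i x) = ∑ i ∈ P, lam i * g i x := by
  classical
  intro x hx
  calc ∑ i, lam i * max 0 (g i x) = ∑ i, if i ∈ P then lam i * g i x else 0 := by
        refine Finset.sum_congr rfl fun i _ => ?_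
        split_ifs with hi
        · rw [max_eq_right (hpos i hi x hx)]
        · rw [max_eq_left (hneg i hi x hx), mul_zero]
    _ = ∑ i ∈ P, lam i * g i x := by rw [Finset.sum_ite_mem, Finset.univ_inter]

theorem adjacent_pieces_of_two_layer_network_general
    (n m : ℕ)
    (w : Fin m → Fin n → ℝ) (b lam : Fin m → ℝ)
    (R R' : Set (Fin n → ℝ))
    (hR : (interior R).Nonempty) (hR' : (interior R').Nonempty)
    (k : Fin m)
    (hRk : ∀ x ∈ R, 0 ≤ (∑ j, w k j * x j) + b k)
    (hR'k : ∀ x ∈ R', (∑ j, w k j * x j) + b k ≤ 0)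
    (hother : ∀ i : Fin m, i ≠ k →
      (∀ x ∈ R ∪ R', 0 ≤ (∑ j, w i j * x j) + b i) ∨
      (∀ x ∈ R ∪ R', (∑ j, w i j * x j) + b i ≤ 0))
    (s s' : (Fin n → ℝ) → ℝ) (hs : IsAffineFn s) (hs' : IsAffineFn s')
    (hNs : ∀ x ∈ R, (∑ i, lam i * max 0 ((∑ j, w i j * x j) + b i)) = s x)
    (hNs' : ∀ x ∈ R', (∑ i, lam i * max 0 ((∑ j, w i j * x j) + b i)) = s' x) :
    ∀ x, s x = s' x + lam k * ((∑ j, w k j * x j) + b k) := by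
  classical
  set g : Fin m → (Fin n → ℝ) → ℝ := fun i x => (∑ j, w i j * x j) + b i
  set P := Finset.univ.filter fun i => i ≠ k ∧ ∀ x ∈ R ∪ R', 0 ≤ g i x
  have hkP : k ∉ P := by simp [P]
  have hpos : ∀ i ∈ P, ∀ x ∈ R ∪ R', 0 ≤ g i x := fun i hi => (Finset.mem_filter.1 hi).2.2
  have hneg : ∀ i ∉ P, i ≠ k → ∀ x ∈ R ∪ R', g i x ≤ 0 := fun i hi hik =>
    (hother i hik).resolve_left fun h => hi (Finset.mem_filter.2 ⟨Finset.mem_univ i, hik, h⟩)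
  have hNR := sum_mul_max_zero_eq_sum_of_sign_pattern lam g (S := R) (insert k P)
    (by
      simp only [Finset.mem_insert, forall_eq_or_imp]
      exact ⟨hRk, fun i hi x hx => hpos i hi x (Or.inl hx)⟩)
    (fun i hi x hx => by
      rw [Finset.mem_insert, not_or] at hi
      exact hneg i hi.2 hi.1 x (Or.inl hx))
  have hNR' := sum_mul_max_zero_eq_sum_of_sign_pattern lam g (S := R') P
    (fun i hi x hx => hpos i hi x (Or.inr hx))
    (fun i hi x hx => if hik : i = k then hik ▸ hR'k x hx else hneg i hi hik x (Or.inr hx))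
  have hs_eq : s = fun x => ∑ i ∈ insert k P, lam i * g i x :=
    hs.eq_of_eqOn_of_nonempty_interior (isAffineFn_sum_mul _ _ _ _) hR fun x hx =>
      (hNs x hx).symm.trans (hNR x hx)
  have hs'_eq : s' = fun x => ∑ i ∈ P, lam i * g i x :=
    hs'.eq_of_eqOn_of_nonempty_interior (isAffineFn_sum_mul _ _ _ _) hR' fun x hx =>
      (hNs' x hx).symm.trans (hNR' x hx)
  intro x
  rw [hs_eq, hs'_eq]
  exact (Finset.sum_insert hkP).trans (add_comm _ _)

/-- Multiple representations of a linear piece: if the two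
regions `R`, `R'` with nonempty interior are separated by the hyperplane of the
`k`-th unit and all other units have constant sign on `R ∪ R'`, then the
adjacent linear pieces `s`, `s'` of the network satisfy
`s = s' + λ_k · (⟨w_k,·⟩ + b_k)`. -/
theorem adjacent_pieces_of_two_layer_network
    (n m : ℕ) (hn : 1 ≤ n)
    (w : Fin m → Fin n → ℝ) (b lam : Fin m → ℝ)
    (R R' : Set (Fin n → ℝ))
    (hR : (interior R).Nonempty) (hR' : (interior R').Nonempty)
    (k : Fin m)
    (hRk : ∀ x ∈ R, 0 ≤ (∑ j, w k j * x j) + b k)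
    (hR'k : ∀ x ∈ R', (∑ j, w k j * x j) + b k ≤ 0)
    (hother : ∀ i : Fin m, i ≠ k →
      (∀ x ∈ R ∪ R', 0 ≤ (∑ j, w i j * x j) + b i) ∨
      (∀ x ∈ R ∪ R', (∑ j, w i j * x j) + b i ≤ 0))
    (s s' : (Fin n → ℝ) → ℝ) (hs : IsAffineFn s) (hs' : IsAffineFn s')
    (hNs : ∀ x ∈ R, (∑ i, lam i * max 0 ((∑ j, w i j * x j) + b i)) = s x)
    (hNs' : ∀ x ∈ R', (∑ i, lam i * max 0 ((∑ j, w i j * x j) + b i)) = s' x) :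
    ∀ x, s x = s' x + lam k * ((∑ j, w k j * x j) + b k) :=
  adjacent_pieces_of_two_layer_network_general n m w b lam R R' hR hR' k hRk hR'k hother s s' hs hs'
    hNs hNs'
end

section
/- Let n ≥ 1, ζ ≥ 1, and let g_μ(x) = ⟨w_μ, x⟩ + b_μ (μ = 1,…,ζ) be affine functionals on ℝⁿ with w_μ ≠ 0. Let R_1,…,R_ζ ⊆ [0,1]ⁿ be nonempty sets such that: (i) for every ν = 2,…,ζ and every j < ν, R_j ⊆ {x : g_ν(x) ≤ 0}; (ii) for every i = 1,…,ζ and every μ ≤ i, R_i ⊆ {x : g_μ(x) ≥ 0}. Let s_1,…,s_ζ be affine functions on ℝⁿ such that for every ν = 2,…,ζ, s_ν = s_{ν−1} on the hyperplane {x : g_ν(x) = 0}. Then there exist parameters v_k ∈ ℝⁿ, c_k, λ_k ∈ ℝ (k = 1,…,ζ+n) such that for every i and every x ∈ R_i, Σ_{k=1}^{ζ+n} λ_k · max(0, ⟨v_k, x⟩ + c_k) = s_i(x). That is, a two-layer ReLU network with ζ+n hidden units realizes the continuous linear spline with pieces s_i on the ordered regions R_i. -/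
/-!
Across the knot `l_ν` the pieces `s_ν` and `s_{ν-1}` agree, so their difference is an affine
function vanishing on a hyperplane, hence a multiple `A_ν g_ν`. On `R_i` the hinge
`max(0, g_ν)` equals `g_ν` for `ν ≤ i` and `0` for `ν > i`, so `∑_{ν ≥ 2} A_ν max(0, g_ν)`
telescopes to `s_i - s_1`. The remaining piece `s_1` is produced by one constant unit
`max(0, 1)` and the `n` coordinate units `max(0, x_t) = x_t`, valid because `R_i ⊆ [0,1]ⁿ`.
-/

open Set

open Finset

theorem isAffineFn_iff {n : ℕ} {s : (Fin n → ℝ) → ℝ} :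
    IsAffineFn s ↔ ∃ (a : Fin n → ℝ) (c : ℝ), ∀ x, s x = a ⬝ᵥ x + c :=
  Iff.rfl

namespace IsAffineFn

variable {n : ℕ} {s s' : (Fin n → ℝ) → ℝ}

theorem sub_s8 (hs : IsAffineFn s) (hs' : IsAffineFn s') : IsAffineFn (s - s') := by
  obtain ⟨a, c, hs⟩ := isAffineFn_iff.mp hs
  obtain ⟨a', c', hs'⟩ := isAffineFn_iff.mp hs'
  refine isAffineFn_iff.mpr ⟨a - a', c - c', fun x => ?_⟩
  simp only [Pi.sub_apply, hs, hs', sub_dotProduct]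
  ring

/-- The multiplier is `⟨a, w⟩ / ⟨w, w⟩`, read off by projecting `x` onto the hyperplane
along `w`. -/
theorem exists_eq_mul_of_eq_zero (hs : IsAffineFn s) {w : Fin n → ℝ} (hw : w ≠ 0) {b : ℝ}
    (h : ∀ x, w ⬝ᵥ x + b = 0 → s x = 0) : ∃ α : ℝ, ∀ x, s x = α * (w ⬝ᵥ x + b) := by
  obtain ⟨a, c, hs⟩ := isAffineFn_iff.mp hs
  have hW : w ⬝ᵥ w ≠ 0 := mt dotProduct_self_eq_zero.mp hw
  refine ⟨a ⬝ᵥ w / w ⬝ᵥ w, fun x => ?_⟩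
  set r := (w ⬝ᵥ x + b) / w ⬝ᵥ w
  have hproj : w ⬝ᵥ (x - r • w) + b = 0 := by
    simp only [r, dotProduct_sub, dotProduct_smul, smul_eq_mul, div_mul_cancel₀ _ hW]
    ring
  have hzero := h _ hproj
  simp only [hs, dotProduct_sub, dotProduct_smul, smul_eq_mul] at hzero ⊢
  linear_combination hzero

theorem exists_sub_eq_mul_of_eq_on_zero (hs : IsAffineFn s) (hs' : IsAffineFn s')
    {w : Fin n → ℝ} (hw : w ≠ 0) {b : ℝ} (h : ∀ x, w ⬝ᵥ x + b = 0 → s x = s' x) :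
    ∃ α : ℝ, ∀ x, s x - s' x = α * (w ⬝ᵥ x + b) :=
  (hs.sub_s8 hs').exists_eq_mul_of_eq_zero hw fun x hx => sub_eq_zero.mpr (h x hx)

end IsAffineFn

theorem sum_mul_max_zero_eq_sub {f h A : ℕ → ℝ} {m i : ℕ} (him : i ≤ m)
    (hjump : ∀ k < m, f (k + 1) - f k = A k * h k) (hpos : ∀ k < i, 0 ≤ h k)
    (hneg : ∀ k, i ≤ k → k < m → h k ≤ 0) :
    ∑ k : Fin m, A k * max 0 (h k) = f i - f 0 := by
  rw [Fin.sum_univ_eq_sum_range (fun k => A k * max 0 (h k)),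
    ← sum_range_add_sum_Ico _ him, ← sum_range_sub]
  have hactive : ∀ k ∈ range i, A k * max 0 (h k) = f (k + 1) - f k := fun k hk => by
    have hk := mem_range.mp hk
    rw [max_eq_right (hpos k hk), hjump k (by omega)]
  have hinactive : ∀ k ∈ Finset.Ico i m, A k * max 0 (h k) = 0 := fun k hk => by
    have hk := Finset.mem_Ico.mp hk
    rw [max_eq_left (hneg k hk.1 hk.2), mul_zero]
  rw [sum_congr rfl hactive, sum_eq_zero hinactive, add_zero]

def reluNet {ι κ : Type*} [Fintype ι] [Fintype κ] (v : ι → κ → ℝ) (c lam : ι → ℝ)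
    (x : κ → ℝ) : ℝ :=
  ∑ k, lam k * max 0 (v k ⬝ᵥ x + c k)

section reluNet

variable {κ : Type*} [Fintype κ]

theorem reluNet_append {p q : ℕ} (v₁ : Fin p → κ → ℝ) (v₂ : Fin q → κ → ℝ)
    (c₁ l₁ : Fin p → ℝ) (c₂ l₂ : Fin q → ℝ) (x : κ → ℝ) :
    reluNet (Fin.append v₁ v₂) (Fin.append c₁ c₂) (Fin.append l₁ l₂) x =
      reluNet v₁ c₁ l₁ x + reluNet v₂ c₂ l₂ x := by
  simp [reluNet, Fin.sum_univ_add]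

theorem reluNet_cons {p : ℕ} (v₀ : κ → ℝ) (v : Fin p → κ → ℝ) (c₀ l₀ : ℝ) (c l : Fin p → ℝ)
    (x : κ → ℝ) :
    reluNet (Fin.cons v₀ v : Fin (p + 1) → κ → ℝ) (Fin.cons c₀ c) (Fin.cons l₀ l) x =
      l₀ * max 0 (v₀ ⬝ᵥ x + c₀) + reluNet v c l x := by
  simp [reluNet, Fin.sum_univ_succ]

theorem reluNet_single_of_nonneg [DecidableEq κ] (a : κ → ℝ) {x : κ → ℝ} (hx : 0 ≤ x) :
    reluNet (fun t => Pi.single t 1) 0 a x = a ⬝ᵥ x := by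
  refine sum_congr rfl fun t _ => ?_
  rw [single_dotProduct, one_mul, Pi.zero_apply, add_zero, max_eq_right (show (0 : ℝ) ≤ x t from hx t)]

end reluNet

theorem spline_over_strict_partial_order_realized_general
    (n ζ : ℕ)
    (w : ℕ → Fin n → ℝ) (b : ℕ → ℝ)
    (hw : ∀ μ, 1 ≤ μ → μ ≤ ζ → w μ ≠ 0)
    (R : ℕ → Set (Fin n → ℝ))
    (hRsub : ∀ i, 1 ≤ i → i ≤ ζ → R i ⊆ Icc (0 : Fin n → ℝ) 1)
    (hzero : ∀ ν, 2 ≤ ν → ν ≤ ζ → ∀ j, 1 ≤ j → j < ν →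
      ∀ x ∈ R j, (∑ t, w ν t * x t) + b ν ≤ 0)
    (hpos : ∀ i, 1 ≤ i → i ≤ ζ → ∀ μ, 1 ≤ μ → μ ≤ i →
      ∀ x ∈ R i, 0 ≤ (∑ t, w μ t * x t) + b μ)
    (s : ℕ → (Fin n → ℝ) → ℝ)
    (hsa : ∀ i, 1 ≤ i → i ≤ ζ → IsAffineFn (s i))
    (hcont : ∀ ν, 2 ≤ ν → ν ≤ ζ → ∀ x, (∑ t, w ν t * x t) + b ν = 0 →
      s ν x = s (ν - 1) x) :
    ∃ (v : Fin (ζ + n) → Fin n → ℝ) (c lam : Fin (ζ + n) → ℝ),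
      ∀ i, 1 ≤ i → i ≤ ζ → ∀ x ∈ R i,
        (∑ k, lam k * max 0 ((∑ t, v k t * x t) + c k)) = s i x := by
  rcases ζ with _ | ζ
  · exact ⟨0, 0, 0, fun i hi hi0 => by omega⟩
  obtain ⟨a, c, hs₁⟩ := isAffineFn_iff.mp (hsa 1 le_rfl (by omega))
  have hjump : ∀ ν, 2 ≤ ν → ν ≤ ζ + 1 → ∃ α : ℝ, ∀ x,
      s ν x - s (ν - 1) x = α * (w ν ⬝ᵥ x + b ν) := fun ν h2 hν =>
    (hsa ν (by omega) hν).exists_sub_eq_mul_of_eq_on_zero (hsa (ν - 1) (by omega) (by omega))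
      (hw ν (by omega) hν) (hcont ν h2 hν)
  choose! A hA using hjump
  refine ⟨Fin.append (Fin.cons 0 fun k => w (k + 2)) (fun t => Pi.single t 1),
    Fin.append (Fin.cons 1 fun k => b (k + 2)) 0,
    Fin.append (Fin.cons c fun k => A (k + 2)) a, fun i hi1 hi x hx => ?_⟩
  have hhinges : ∑ k : Fin ζ, A (k + 2) * max 0 (w (k + 2) ⬝ᵥ x + b (k + 2)) =
      s (i - 1 + 1) x - s (0 + 1) x :=
    sum_mul_max_zero_eq_sub (f := fun k => s (k + 1) x)
      (h := fun k => w (k + 2) ⬝ᵥ x + b (k + 2)) (A := fun k => A (k + 2)) (i := i - 1) (by omega)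
      (fun k hk => by simpa using hA (k + 2) (by omega) (by omega) x)
      (fun k hk => hpos i hi1 hi (k + 2) (by omega) (by omega) x hx)
      (fun k hk hkζ => hzero (k + 2) (by omega) (by omega) i hi1 (by omega) x hx)
  change reluNet _ _ _ x = _
  rw [reluNet_append, reluNet_cons, reluNet_single_of_nonneg a (hRsub i hi1 hi hx).1]
  rw [Nat.sub_add_cancel hi1, zero_add, hs₁] at hhinges
  simp only [reluNet, zero_dotProduct, zero_add, max_eq_right zero_le_one, mul_one, hhinges]
  ring

/-- Approximation over a single strict partial order: a
continuous linear spline with pieces `s₁,…,s_ζ` on ordered regions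
`R₁,…,R_ζ ⊆ [0,1]ⁿ` is realized exactly by a two-layer ReLU network with
`ζ + n` hidden units. -/
theorem spline_over_strict_partial_order_realized
    (n ζ : ℕ) (hn : 1 ≤ n) (hζ : 1 ≤ ζ)
    (w : ℕ → Fin n → ℝ) (b : ℕ → ℝ)
    (hw : ∀ μ, 1 ≤ μ → μ ≤ ζ → w μ ≠ 0)
    (R : ℕ → Set (Fin n → ℝ))
    (hRne : ∀ i, 1 ≤ i → i ≤ ζ → (R i).Nonempty)
    (hRsub : ∀ i, 1 ≤ i → i ≤ ζ → R i ⊆ Icc (0 : Fin n → ℝ) 1)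
    (hzero : ∀ ν, 2 ≤ ν → ν ≤ ζ → ∀ j, 1 ≤ j → j < ν →
      ∀ x ∈ R j, (∑ t, w ν t * x t) + b ν ≤ 0)
    (hpos : ∀ i, 1 ≤ i → i ≤ ζ → ∀ μ, 1 ≤ μ → μ ≤ i →
      ∀ x ∈ R i, 0 ≤ (∑ t, w μ t * x t) + b μ)
    (s : ℕ → (Fin n → ℝ) → ℝ)
    (hsa : ∀ i, 1 ≤ i → i ≤ ζ → IsAffineFn (s i))
    (hcont : ∀ ν, 2 ≤ ν → ν ≤ ζ → ∀ x, (∑ t, w ν t * x t) + b ν = 0 →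
      s ν x = s (ν - 1) x) :
    ∃ (v : Fin (ζ + n) → Fin n → ℝ) (c lam : Fin (ζ + n) → ℝ),
      ∀ i, 1 ≤ i → i ≤ ζ → ∀ x ∈ R i,
        (∑ k, lam k * max 0 ((∑ t, v k t * x t) + c k)) = s i x :=
  spline_over_strict_partial_order_realized_general n ζ w b hw R hRsub hzero hpos s hsa hcont
end

section
/- For every n ≥ 2, every continuously differentiable function f : [0,1]ⁿ → ℝ, and every ε > 0, there exist a finite family H of affine hyperplanes of ℝⁿ and a continuous function ĥ : [0,1]ⁿ → ℝ that is affine on each closed region into which H partitions [0,1]ⁿ, such that |f(x) − ĥ(x)| < ε for all x ∈ [0,1]ⁿ. -/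
open Set

lemma smooth_approx (n : ℕ) (f : (Fin n → ℝ) → ℝ) (hf : ContinuousOn f (Icc 0 1))
    (δ : ℝ) (hδ : 0 < δ) :
    ∃ g : (Fin n → ℝ) → ℝ, ContDiff ℝ (⊤ : ℕ∞) g ∧ ∀ x ∈ Icc (0 : Fin n → ℝ) 1, |f x - g x| < δ := by
  haveI : CompactSpace (Icc (0 : Fin n → ℝ) 1) := isCompact_iff_compactSpace.mp isCompact_Icc
  set X := Icc (0 : Fin n → ℝ) 1 with hX
  let coord : Fin n → C(X, ℝ) := fun j => ⟨fun x => (x : Fin n → ℝ) j,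
    ((continuous_apply j).comp continuous_subtype_val)⟩
  let A : Subalgebra ℝ C(X, ℝ) := Algebra.adjoin ℝ (Set.range coord)
  have hsep : A.SeparatesPoints := by
    intro x y hxy
    have : ∃ j, (x : Fin n → ℝ) j ≠ (y : Fin n → ℝ) j := by
      by_contra h; push_neg at h
      exact hxy (Subtype.ext (funext h))
    obtain ⟨j, hj⟩ := this
    exact ⟨coord j, ⟨coord j, Algebra.subset_adjoin ⟨j, rfl⟩, rfl⟩, hj⟩
  obtain ⟨g₀, hg₀⟩ := ContinuousMap.exists_mem_subalgebra_near_continuous_of_separatesPoints A hsep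
    (X.restrict f) hf.restrict δ hδ
  have hext : ∀ gg : C(X, ℝ), gg ∈ A →
      ∃ G : (Fin n → ℝ) → ℝ, ContDiff ℝ (⊤ : ℕ∞) G ∧ ∀ x : X, gg x = G x := by
    intro gg hgg
    induction hgg using Algebra.adjoin_induction with
    | mem u hu =>
        obtain ⟨j, rfl⟩ := hu
        exact ⟨fun v => v j, (ContinuousLinearMap.proj j : (Fin n → ℝ) →L[ℝ] ℝ).contDiff,
          fun x => rfl⟩
    | algebraMap r => exact ⟨fun _ => r, contDiff_const, fun x => rfl⟩
    | add u v hu hv ihu ihv =>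
        obtain ⟨Gu, hGu, hu'⟩ := ihu; obtain ⟨Gv, hGv, hv'⟩ := ihv
        exact ⟨Gu + Gv, hGu.add hGv, fun x => by simp [hu' x, hv' x]⟩
    | mul u v hu hv ihu ihv =>
        obtain ⟨Gu, hGu, hu'⟩ := ihu; obtain ⟨Gv, hGv, hv'⟩ := ihv
        exact ⟨Gu * Gv, hGu.mul hGv, fun x => by simp [hu' x, hv' x]⟩
  obtain ⟨G, hG, hGg⟩ := hext g₀ g₀.2
  refine ⟨G, hG, fun x hx => ?_⟩
  have := hg₀ ⟨x, hx⟩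
  rw [hGg ⟨x, hx⟩] at this
  rw [abs_sub_comm]; rw [Real.norm_eq_abs] at this; exact this
lemma fderiv_lip (n : ℕ) (g : (Fin n → ℝ) → ℝ) (hg : ContDiff ℝ (⊤ : ℕ∞) g) :
    ∃ K : ℝ, 0 ≤ K ∧ ∀ x ∈ Icc (0 : Fin n → ℝ) 1, ∀ y ∈ Icc (0 : Fin n → ℝ) 1,
      ‖fderiv ℝ g y - fderiv ℝ g x‖ ≤ K * ‖y - x‖ := by
  have hF : ContDiff ℝ (⊤ : ℕ∞) (fderiv ℝ g) := hg.fderiv_right (mod_cast le_top)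
  have hcont : Continuous fun z => ‖fderiv ℝ (fderiv ℝ g) z‖ :=
    (hF.continuous_fderiv (by simp)).norm
  obtain ⟨M, hM⟩ := isCompact_Icc.exists_bound_of_continuousOn
    (f := fderiv ℝ (fderiv ℝ g)) (hF.continuous_fderiv (by simp)).continuousOn
  refine ⟨max M 0, le_max_right _ _, fun x hx y hy => ?_⟩
  exact (convex_Icc (0 : Fin n → ℝ) 1).norm_image_sub_le_of_norm_fderiv_le
    (fun z _ => (hF.differentiable (by simp)) z)
    (fun z hz => (hM z hz).trans (le_max_left _ _)) hx hy
lemma taylor_bd (n : ℕ) (g : (Fin n → ℝ) → ℝ) (hg : Differentiable ℝ g) {K : ℝ} (hK : 0 ≤ K)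
    (hlip : ∀ x ∈ Icc (0 : Fin n → ℝ) 1, ∀ y ∈ Icc (0 : Fin n → ℝ) 1,
      ‖fderiv ℝ g y - fderiv ℝ g x‖ ≤ K * ‖y - x‖) :
    ∀ x ∈ Icc (0 : Fin n → ℝ) 1, ∀ y ∈ Icc (0 : Fin n → ℝ) 1,
      |g y - g x - fderiv ℝ g x (y - x)| ≤ K * ‖y - x‖ ^ 2 := by
  intro x hx y hy
  set L := fderiv ℝ g x with hL
  have hseg : segment ℝ x y ⊆ Icc 0 1 := (convex_Icc _ _).segment_subset hx hy
  have hdist : ∀ z ∈ segment ℝ x y, ‖z - x‖ ≤ ‖y - x‖ := by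
    rintro z ⟨a, b, ha, hb, hab, rfl⟩
    have ha' : a = 1 - b := by linarith
    have heq : a • x + b • y - x = b • (y - x) := by rw [ha']; module
    rw [heq, norm_smul, Real.norm_eq_abs, abs_of_nonneg hb]
    have hb1 : b ≤ 1 := by linarith
    nlinarith [norm_nonneg (y - x)]
  have key := (convex_segment x y).norm_image_sub_le_of_norm_fderiv_le
    (f := fun z => g z - L z)
    (fun z _ => ((hg z).sub L.differentiableAt))
    (C := K * ‖y - x‖)
    (fun z hz => by
      have : fderiv ℝ (fun z => g z - L z) z = fderiv ℝ g z - L := by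
        rw [fderiv_fun_sub (hg z) L.differentiableAt, L.fderiv]
      rw [this]
      calc ‖fderiv ℝ g z - L‖ ≤ K * ‖z - x‖ := hlip x hx z (hseg hz)
        _ ≤ K * ‖y - x‖ := mul_le_mul_of_nonneg_left (hdist z hz) hK)
    (left_mem_segment ℝ x y) (right_mem_segment ℝ x y)
  have : g y - L y - (g x - L x) = g y - g x - L (y - x) := by rw [map_sub]; ring
  rw [this] at key
  calc |g y - g x - L (y - x)| ≤ K * ‖y - x‖ * ‖y - x‖ := key
    _ = K * ‖y - x‖ ^ 2 := by ring
lemma tangent_affine (n : ℕ) (L : (Fin n → ℝ) →L[ℝ] ℝ) (p : Fin n → ℝ) (C : ℝ) (y : Fin n → ℝ) :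
    L (y - p) + C * ((∑ j, (y j)^2) - ∑ j, (y j - p j)^2)
      = (∑ j, (L (fun k => if j = k then 1 else 0) + 2*C*p j) * y j) + (-(L p) - C * ∑ j, (p j)^2) := by
  have hy : L y = ∑ j, y j * L (fun k => if j = k then 1 else 0) := by
    simpa [smul_eq_mul] using L.toLinearMap.pi_apply_eq_sum_univ y
  have hp : L p = ∑ j, p j * L (fun k => if j = k then 1 else 0) := by
    simpa [smul_eq_mul] using L.toLinearMap.pi_apply_eq_sum_univ p
  rw [map_sub, hy, hp]
  have key : ∑ j, (y j * L (fun k => if j = k then 1 else 0) - p j * L (fun k => if j = k then 1 else 0)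
        + (C * (y j)^2 - C * (y j - p j)^2))
      = ∑ j, ((L (fun k => if j = k then 1 else 0) + 2*C*p j) * y j
        + (-(p j * L (fun k => if j = k then 1 else 0)) - C * (p j)^2)) :=
    Finset.sum_congr rfl (fun j _ => by ring)
  simp only [Finset.sum_add_distrib, Finset.sum_sub_distrib, ← Finset.mul_sum, Finset.sum_neg_distrib] at key
  linarith
lemma pos_on_preconn {α : Type*} [TopologicalSpace α] {s : Set α} (hs : IsPreconnected s)
    {φ : α → ℝ} (hφ : Continuous φ) (h0 : ∀ y ∈ s, φ y ≠ 0) {x : α} (hx : x ∈ s)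
    (hpos : 0 < φ x) : ∀ y ∈ s, 0 < φ y := by
  intro y hy
  by_contra hneg
  push_neg at hneg
  have h01 : (0 : ℝ) ∈ Icc (φ y) (φ x) := ⟨hneg, le_of_lt hpos⟩
  obtain ⟨z, hz, hz0⟩ := hs.intermediate_value hy hx hφ.continuousOn h01
  exact h0 z hz hz0
set_option maxHeartbeats 2000000 in
/-- Every `C¹` function on `[0,1]ⁿ` (`n ≥ 2`) is uniformly
approximated, to any accuracy, by a continuous function that is affine on each
closed region (closure of a connected component of the complement of a finite
family of affine hyperplanes intersected with the cube). -/
theorem C1_approx_by_continuous_piecewise_linear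
    (n : ℕ) (hn : 2 ≤ n)
    (f : (Fin n → ℝ) → ℝ) (hf : ContDiffOn ℝ 1 f (Icc 0 1))
    (ε : ℝ) (hε : 0 < ε) :
    ∃ (m : ℕ) (w : Fin m → Fin n → ℝ) (b : Fin m → ℝ) (h : (Fin n → ℝ) → ℝ),
      (∀ i, w i ≠ 0) ∧
      ContinuousOn h (Icc 0 1) ∧
      (∀ x ∈ (Icc (0 : Fin n → ℝ) 1) \
          ⋃ i, {y : Fin n → ℝ | (∑ j, w i j * y j) + b i = 0},
        ∃ (a : Fin n → ℝ) (c : ℝ),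
          ∀ y ∈ closure (connectedComponentIn
              ((Icc (0 : Fin n → ℝ) 1) \
                ⋃ i, {y : Fin n → ℝ | (∑ j, w i j * y j) + b i = 0}) x),
            h y = (∑ j, a j * y j) + c) ∧
      ∀ x ∈ Icc (0 : Fin n → ℝ) 1, |f x - h x| < ε := by
  classical
  have hn0 : 0 < n := by omega
  obtain ⟨g, hg, hfg⟩ := smooth_approx n f hf.continuousOn (ε/3) (by positivity)
  obtain ⟨K, hK0, hlip⟩ := fderiv_lip n g hg
  have hgd : Differentiable ℝ g := hg.differentiable (by simp)
  have htay := taylor_bd n g hgd hK0 hlip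
  set C : ℝ := K + 1 with hCdef
  have hC0 : 0 < C := by positivity
  set B : ℝ := K + C * n with hBdef
  have hB0 : 0 ≤ B := by positivity
  -- choose N
  obtain ⟨N, hNgt⟩ := exists_nat_gt (max 1 (B * 3 / ε))
  have hN1 : (1 : ℝ) ≤ N := le_of_lt (lt_of_le_of_lt (le_max_left _ _) hNgt)
  have hNpos : (0 : ℝ) < N := by linarith
  have hBN : B / (N:ℝ)^2 ≤ ε / 3 := by
    have h1 : B * 3 / ε < N := lt_of_le_of_lt (le_max_right _ _) hNgt
    have h2 : B * 3 < N * ε := by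
      rw [div_lt_iff₀ hε] at h1; linarith
    have h3 : (N:ℝ) ≤ (N:ℝ)^2 := by nlinarith
    have h4 : B / (N:ℝ)^2 ≤ B / N := div_le_div_of_nonneg_left hB0 hNpos h3
    have h5 : B / (N:ℝ) ≤ ε / 3 := by
      rw [div_le_iff₀ hNpos]; linarith
    linarith
  -- basic quadratic facts
  set q : (Fin n → ℝ) → ℝ := fun v => ∑ j, (v j)^2 with hqdef
  have hq_nonneg : ∀ v, 0 ≤ q v := fun v => Finset.sum_nonneg fun j _ => sq_nonneg _
  have hq_ge : ∀ v : Fin n → ℝ, ‖v‖^2 ≤ q v := by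
    intro v
    have hnorm : ‖v‖ ≤ Real.sqrt (q v) := by
      rw [pi_norm_le_iff_of_nonneg (Real.sqrt_nonneg _)]
      intro j
      rw [Real.norm_eq_abs, ← Real.sqrt_sq_eq_abs]
      exact Real.sqrt_le_sqrt (Finset.single_le_sum (f := fun j => (v j)^2)
        (fun i _ => sq_nonneg _) (Finset.mem_univ j))
    calc ‖v‖^2 ≤ Real.sqrt (q v)^2 := by
          apply pow_le_pow_left₀ (norm_nonneg _) hnorm
      _ = q v := Real.sq_sqrt (hq_nonneg v)
  have hq_pos : ∀ v : Fin n → ℝ, v ≠ 0 → 0 < q v := by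
    intro v hv
    obtain ⟨j, hj⟩ := Function.ne_iff.mp hv
    exact Finset.sum_pos' (fun i _ => sq_nonneg _)
      ⟨j, Finset.mem_univ j, lt_of_le_of_ne (sq_nonneg _) (Ne.symm (pow_ne_zero 2 hj))⟩
  -- grid
  set pt : (Fin n → Fin (N+1)) → (Fin n → ℝ) := fun p j => (p j : ℝ) / N with hptdef
  have hpt_mem : ∀ p, pt p ∈ Icc (0 : Fin n → ℝ) 1 := by
    intro p
    rw [mem_Icc]
    constructor <;> intro j
    · show (0:ℝ) ≤ (p j : ℝ) / N
      positivity
    · show (p j : ℝ) / N ≤ 1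
      rw [div_le_one hNpos]
      exact_mod_cast (p j).is_le
  have hpt_inj : Function.Injective pt := by
    intro p p' hpp
    funext j
    have := congrFun hpp j
    simp only [hptdef] at this
    have : (p j : ℝ) = p' j := by
      field_simp at this; exact_mod_cast this
    exact Fin.ext (by exact_mod_cast this)
  set Fg := fderiv ℝ g with hFgdef
  set E : Fin n → (Fin n → ℝ) := fun j k => if j = k then 1 else 0 with hEdef
  set aT : (Fin n → Fin (N+1)) → Fin n → ℝ := fun p j => Fg (pt p) (E j) + 2*C*(pt p j) with haTdef
  set cT : (Fin n → Fin (N+1)) → ℝ := fun p => g (pt p) - Fg (pt p) (pt p) - C * q (pt p) with hcTdef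
  set aS : (Fin n → Fin (N+1)) → Fin n → ℝ := fun p j => 2*C*(pt p j) with haSdef
  set cS : (Fin n → Fin (N+1)) → ℝ := fun p => -(C * q (pt p)) with hcSdef
  set T : (Fin n → Fin (N+1)) → (Fin n → ℝ) → ℝ := fun p y => (∑ j, aT p j * y j) + cT p with hTdef
  set S : (Fin n → Fin (N+1)) → (Fin n → ℝ) → ℝ := fun p y => (∑ j, aS p j * y j) + cS p with hSdef
  -- analytic forms of the tangent functions
  have hT_eq : ∀ p y, T p y = g (pt p) + (Fg (pt p) (y - pt p) + C * (q y - q (y - pt p))) := by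
    intro p y
    have h := tangent_affine n (Fg (pt p)) (pt p) C y
    simp only [hTdef, haTdef, hcTdef, hqdef, hEdef, Pi.sub_apply]
    linarith [h]
  have hS_eq : ∀ p y, S p y = C * (q y - q (y - pt p)) := by
    intro p y
    have h := tangent_affine n (0 : (Fin n → ℝ) →L[ℝ] ℝ) (pt p) C y
    simp only [ContinuousLinearMap.zero_apply, zero_add, neg_zero, zero_sub] at h
    simp only [hSdef, haSdef, hcSdef, hqdef, Pi.sub_apply]
    linarith [h]
  -- tangents lie below, and are close at grid points
  have hT_le : ∀ p, ∀ y ∈ Icc (0:Fin n → ℝ) 1, T p y ≤ g y + C * q y := by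
    intro p y hy
    rw [hT_eq]
    have hrem := htay (pt p) (hpt_mem p) y hy
    have h1 := hq_ge (y - pt p)
    have h2 : K * ‖y - pt p‖^2 ≤ K * q (y - pt p) := mul_le_mul_of_nonneg_left h1 hK0
    have h3 := (abs_le.mp hrem).1
    have h4 : 0 ≤ q (y - pt p) := hq_nonneg _
    have hCq : C * q (y - pt p) = K * q (y - pt p) + q (y - pt p) := by rw [hCdef]; ring
    linarith
  have hS_le : ∀ p y, S p y ≤ C * q y := by
    intro p y
    rw [hS_eq]
    have h4 : 0 ≤ C * q (y - pt p) := mul_nonneg hC0.le (hq_nonneg _)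
    linarith
  have hnear : ∀ y ∈ Icc (0:Fin n → ℝ) 1, ∃ p, ∀ j, |y j - pt p j| ≤ 1 / N := by
    intro y hy
    have hyj : ∀ j, 0 ≤ y j ∧ y j ≤ 1 := fun j => ⟨hy.1 j, hy.2 j⟩
    refine ⟨fun j => ⟨min ⌊(N:ℝ) * y j⌋₊ N, by omega⟩, fun j => ?_⟩
    have h0 : 0 ≤ (N:ℝ) * y j := by nlinarith [(hyj j).1]
    have hfl : ⌊(N:ℝ) * y j⌋₊ ≤ N := by
      have hle : (N:ℝ) * y j ≤ N := by nlinarith [(hyj j).2]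
      calc ⌊(N:ℝ) * y j⌋₊ ≤ ⌊(N:ℝ)⌋₊ := Nat.floor_le_floor hle
        _ = N := Nat.floor_natCast N
    have h1 : (⌊(N:ℝ) * y j⌋₊ : ℝ) ≤ N * y j := Nat.floor_le h0
    have h2 : (N:ℝ) * y j < ⌊(N:ℝ) * y j⌋₊ + 1 := Nat.lt_floor_add_one _
    have hptpj : pt (fun j => (⟨min ⌊(N:ℝ) * y j⌋₊ N, by omega⟩ : Fin (N+1))) j
        = (⌊(N:ℝ) * y j⌋₊ : ℝ) / N := by
      simp [hptdef, min_eq_left hfl]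
    rw [hptpj]
    have hA : (⌊(N:ℝ) * y j⌋₊ : ℝ) / N ≤ y j := by
      rw [div_le_iff₀ hNpos]
      nlinarith
    have hB2 : y j ≤ (⌊(N:ℝ) * y j⌋₊ : ℝ) / N + 1 / N := by
      rw [← add_div, le_div_iff₀ hNpos]
      nlinarith
    rw [abs_le]
    constructor
    · have : 0 < 1 / (N:ℝ) := by positivity
      linarith
    · linarith
  have hT_close : ∀ y ∈ Icc (0:Fin n → ℝ) 1, ∃ p,
      g y + C * q y - T p y ≤ B / (N:ℝ)^2 ∧ C * q y - S p y ≤ B / (N:ℝ)^2 := by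
    intro y hy
    obtain ⟨p, hp⟩ := hnear y hy
    have hnorm : ‖y - pt p‖ ≤ 1 / N := by
      rw [pi_norm_le_iff_of_nonneg (by positivity)]
      intro j; rw [Pi.sub_apply, Real.norm_eq_abs]; exact hp j
    have hn2 : ‖y - pt p‖^2 ≤ 1/(N:ℝ)^2 := by
      calc ‖y - pt p‖^2 ≤ (1/(N:ℝ))^2 := pow_le_pow_left₀ (norm_nonneg _) hnorm 2
        _ = 1/(N:ℝ)^2 := by ring
    have hq_le : q (y - pt p) ≤ n * (1/(N:ℝ)^2) := by
      rw [hqdef]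
      calc ∑ j, ((y - pt p) j)^2 ≤ ∑ _j : Fin n, (1/(N:ℝ))^2 := by
            apply Finset.sum_le_sum
            intro j _
            rw [Pi.sub_apply]
            calc (y j - pt p j)^2 = |y j - pt p j|^2 := (sq_abs _).symm
              _ ≤ (1/(N:ℝ))^2 := pow_le_pow_left₀ (abs_nonneg _) (hp j) 2
        _ = n * (1/(N:ℝ)^2) := by
            rw [Finset.sum_const, Finset.card_univ, Fintype.card_fin, nsmul_eq_mul]
            ring
    have hrem := htay (pt p) (hpt_mem p) y hy
    have habs := (abs_le.mp hrem).2
    have hKn : K * ‖y - pt p‖^2 ≤ K * (1/(N:ℝ)^2) := mul_le_mul_of_nonneg_left hn2 hK0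
    have hCq : C * q (y - pt p) ≤ C * (n * (1/(N:ℝ)^2)) := mul_le_mul_of_nonneg_left hq_le hC0.le
    have hN2 : ((N:ℝ)^2) ≠ 0 := by positivity
    have hBexp : B / (N:ℝ)^2 = K * (1/(N:ℝ)^2) + C * (n * (1/(N:ℝ)^2)) := by
      rw [hBdef]
      field_simp
    have hKnn : 0 ≤ K * (1/(N:ℝ)^2) := by positivity
    refine ⟨p, ?_, ?_⟩
    · rw [hT_eq]; linarith
    · rw [hS_eq]; linarith
  -- the piecewise-linear approximant
  have hNe : (Finset.univ : Finset (Fin n → Fin (N+1))).Nonempty := Finset.univ_nonempty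
  set maxT : (Fin n → ℝ) → ℝ := fun y => Finset.univ.sup' hNe (fun p => T p y) with hmaxTdef
  set maxS : (Fin n → ℝ) → ℝ := fun y => Finset.univ.sup' hNe (fun p => S p y) with hmaxSdef
  have hTcont : ∀ p, Continuous (T p) := by
    intro p
    simp only [hTdef]
    exact (continuous_finset_sum _ fun j _ => continuous_const.mul (continuous_apply j)).add continuous_const
  have hScont : ∀ p, Continuous (S p) := by
    intro p
    simp only [hSdef]
    exact (continuous_finset_sum _ fun j _ => continuous_const.mul (continuous_apply j)).add continuous_const
  have hmaxT_cont : Continuous maxT := by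
    rw [hmaxTdef]
    exact continuous_iff_continuousAt.mpr fun x =>
      ContinuousAt.finset_sup'_apply hNe fun p _ => (hTcont p).continuousAt
  have hmaxS_cont : Continuous maxS := by
    rw [hmaxSdef]
    exact continuous_iff_continuousAt.mpr fun x =>
      ContinuousAt.finset_sup'_apply hNe fun p _ => (hScont p).continuousAt
  have hmaxT_le : ∀ y ∈ Icc (0:Fin n→ℝ) 1, maxT y ≤ g y + C * q y := fun y hy =>
    Finset.sup'_le _ _ fun p _ => hT_le p y hy
  have hmaxS_le : ∀ y, maxS y ≤ C * q y := fun y =>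
    Finset.sup'_le _ _ fun p _ => hS_le p y
  have hmax_ge : ∀ y ∈ Icc (0:Fin n→ℝ) 1,
      g y + C * q y - B / (N:ℝ)^2 ≤ maxT y ∧ C * q y - B / (N:ℝ)^2 ≤ maxS y := by
    intro y hy
    obtain ⟨p, hp1, hp2⟩ := hT_close y hy
    have h1 : T p y ≤ maxT y := by
      rw [hmaxTdef]; exact Finset.le_sup' (fun p => T p y) (Finset.mem_univ p)
    have h2 : S p y ≤ maxS y := by
      rw [hmaxSdef]; exact Finset.le_sup' (fun p => S p y) (Finset.mem_univ p)
    exact ⟨le_trans (by linarith : g y + C * q y - B/(N:ℝ)^2 ≤ T p y) h1,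
      le_trans (by linarith : C * q y - B/(N:ℝ)^2 ≤ S p y) h2⟩
  -- index type for the hyperplanes
  clear_value maxT maxS
  set Idx := Bool × {pq : (Fin n → Fin (N+1)) × (Fin n → Fin (N+1)) // pq.1 ≠ pq.2} with hIdxdef
  set eI : Fin (Fintype.card Idx) ≃ Idx := (Fintype.equivFin Idx).symm with heIdef
  set w : Fin (Fintype.card Idx) → Fin n → ℝ := fun i =>
    if (eI i).1 then (fun j => aT (eI i).2.1.1 j - aT (eI i).2.1.2 j)
    else (fun j => aS (eI i).2.1.1 j - aS (eI i).2.1.2 j) with hwdef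
  set bb : Fin (Fintype.card Idx) → ℝ := fun i =>
    if (eI i).1 then cT (eI i).2.1.1 - cT (eI i).2.1.2
    else cS (eI i).2.1.1 - cS (eI i).2.1.2 with hbdef
  set hpl : (Fin n → ℝ) → ℝ := fun y => maxT y - maxS y with hhdef
  have hwb_eval : ∀ i (y : Fin n → ℝ), (∑ j, w i j * y j) + bb i =
      (if (eI i).1 then T (eI i).2.1.1 y - T (eI i).2.1.2 y
       else S (eI i).2.1.1 y - S (eI i).2.1.2 y) := by
    intro i y
    by_cases hσ : (eI i).1
    · simp only [hwdef, hbdef, hσ, if_true, hTdef]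
      simp only [sub_mul, Finset.sum_sub_distrib]
      ring
    · simp only [hwdef, hbdef, hσ, Bool.false_eq_true, if_false, hSdef]
      simp only [sub_mul, Finset.sum_sub_distrib]
      ring
  refine ⟨Fintype.card Idx, w, bb, hpl, ?_, ?_, ?_, ?_⟩
  · -- each normal vector is nonzero
    intro i hwi
    set p := (eI i).2.1.1 with hpdef
    set p' := (eI i).2.1.2 with hp'def
    have hne : p ≠ p' := (eI i).2.2
    have hptne : pt p ≠ pt p' := fun he => hne (hpt_inj he)
    obtain ⟨j0, hj0⟩ := Function.ne_iff.mp hptne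
    by_cases hσ : (eI i).1
    · -- tangent gradients of the strictly convex g + C q are injective
      set v : Fin n → ℝ := pt p - pt p' with hvdef
      have hv0 : v ≠ 0 := sub_ne_zero.mpr hptne
      have hqv := hq_pos v hv0
      have hdiff : ∀ j, Fg (pt p) (E j) - Fg (pt p') (E j) = -(2*C*(v j)) := by
        intro j
        have hc := congrFun hwi j
        simp only [hwdef, hσ, if_true, haTdef, Pi.zero_apply] at hc
        simp only [hvdef, Pi.sub_apply]
        linarith
      have happ : (Fg (pt p) - Fg (pt p')) v = ∑ j, v j * ((Fg (pt p) - Fg (pt p')) (E j)) := by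
        simpa [smul_eq_mul, hEdef] using
          (Fg (pt p) - Fg (pt p')).toLinearMap.pi_apply_eq_sum_univ v
      have hval : (Fg (pt p) - Fg (pt p')) v = -(2*C) * q v := by
        rw [happ, hqdef]
        rw [Finset.mul_sum]
        apply Finset.sum_congr rfl
        intro j _
        rw [ContinuousLinearMap.sub_apply, hdiff j]
        ring
      have hbound : |(Fg (pt p) - Fg (pt p')) v| ≤ K * q v := by
        calc |(Fg (pt p) - Fg (pt p')) v| ≤ ‖Fg (pt p) - Fg (pt p')‖ * ‖v‖ := by
              rw [← Real.norm_eq_abs]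
              exact (Fg (pt p) - Fg (pt p')).le_opNorm v
          _ ≤ (K * ‖pt p - pt p'‖) * ‖v‖ :=
              mul_le_mul_of_nonneg_right (hlip (pt p') (hpt_mem p') (pt p) (hpt_mem p))
                (norm_nonneg v)
          _ = K * ‖v‖^2 := by rw [hvdef]; ring
          _ ≤ K * q v := mul_le_mul_of_nonneg_left (hq_ge v) hK0
      rw [hval] at hbound
      have habs : |(-(2*C)) * q v| = 2*C*q v := by
        rw [abs_mul, abs_neg, abs_of_pos (by positivity : (0:ℝ) < 2*C), abs_of_pos hqv]
      rw [habs] at hbound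
      rw [hCdef] at hbound
      nlinarith
    · have hc := congrFun hwi j0
      simp only [hwdef, hσ, Bool.false_eq_true, if_false, haSdef, Pi.zero_apply] at hc
      have hpt_eq : pt p j0 = pt p' j0 := by
        have h2C : (2*C : ℝ) ≠ 0 := by positivity
        rw [hpdef, hp'def]
        have hc2 : 2*C*(pt (eI i).2.1.1 j0) = 2*C*(pt (eI i).2.1.2 j0) := by linarith
        exact mul_left_cancel₀ h2C hc2
      exact hj0 hpt_eq
  · -- continuity
    rw [hhdef]
    exact (hmaxT_cont.sub hmaxS_cont).continuousOn
  · -- affine on each region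
    rintro x ⟨hxIcc, hxU⟩
    set Sset := Icc (0 : Fin n → ℝ) 1 \
        ⋃ i, {y : Fin n → ℝ | (∑ j, w i j * y j) + bb i = 0} with hSsetdef
    have hne_TS : ∀ y ∈ Sset, ∀ (σ : Bool) (p p' : Fin n → Fin (N+1)) (hpp : p ≠ p'),
        (if σ then T p y - T p' y else S p y - S p' y) ≠ 0 := by
      intro y hy σ p p' hpp h0
      apply hy.2
      rw [mem_iUnion]
      refine ⟨eI.symm (σ, ⟨(p, p'), hpp⟩), ?_⟩
      rw [mem_setOf_eq, hwb_eval]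
      simp only [Equiv.apply_symm_apply]
      exact h0
    set U := connectedComponentIn Sset x with hUdef
    have hUsub : U ⊆ Sset := connectedComponentIn_subset _ _
    have hUx : x ∈ U := mem_connectedComponentIn ⟨hxIcc, hxU⟩
    have hUconn : IsPreconnected U := isPreconnected_connectedComponentIn
    obtain ⟨pm, -, hpm⟩ := Finset.exists_max_image Finset.univ (fun p => T p x) hNe
    obtain ⟨qm, -, hqm⟩ := Finset.exists_max_image Finset.univ (fun p => S p x) hNe
    have hTmax : ∀ y ∈ U, ∀ p, T p y ≤ T pm y := by
      intro y hyU p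
      rcases eq_or_ne p pm with rfl | hppm
      · exact le_refl _
      · have hφ : Continuous fun z => T pm z - T p z := (hTcont pm).sub (hTcont p)
        have h0 : ∀ z ∈ U, T pm z - T p z ≠ 0 := by
          intro z hz
          have hh := hne_TS z (hUsub hz) true pm p (Ne.symm hppm)
          simpa using hh
        have hx0 : 0 < T pm x - T p x := by
          have h1 := hpm p (Finset.mem_univ p)
          exact lt_of_le_of_ne (by linarith) (Ne.symm (h0 x hUx))
        have := pos_on_preconn hUconn hφ h0 hUx hx0 y hyU
        linarith
    have hSmax : ∀ y ∈ U, ∀ p, S p y ≤ S qm y := by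
      intro y hyU p
      rcases eq_or_ne p qm with rfl | hppm
      · exact le_refl _
      · have hφ : Continuous fun z => S qm z - S p z := (hScont qm).sub (hScont p)
        have h0 : ∀ z ∈ U, S qm z - S p z ≠ 0 := by
          intro z hz
          have hh := hne_TS z (hUsub hz) false qm p (Ne.symm hppm)
          simpa using hh
        have hx0 : 0 < S qm x - S p x := by
          have h1 := hqm p (Finset.mem_univ p)
          exact lt_of_le_of_ne (by linarith) (Ne.symm (h0 x hUx))
        have := pos_on_preconn hUconn hφ h0 hUx hx0 y hyU
        linarith
    have hmaxT_eqU : EqOn maxT (T pm) (closure U) := by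
      apply EqOn.closure ?_ hmaxT_cont (hTcont pm)
      intro y hyU
      apply le_antisymm
      · rw [hmaxTdef]
        exact Finset.sup'_le _ _ fun p _ => hTmax y hyU p
      · rw [hmaxTdef]
        exact Finset.le_sup' (fun p => T p y) (Finset.mem_univ pm)
    have hmaxS_eqU : EqOn maxS (S qm) (closure U) := by
      apply EqOn.closure ?_ hmaxS_cont (hScont qm)
      intro y hyU
      apply le_antisymm
      · rw [hmaxSdef]
        exact Finset.sup'_le _ _ fun p _ => hSmax y hyU p
      · rw [hmaxSdef]
        exact Finset.le_sup' (fun p => S p y) (Finset.mem_univ qm)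
    refine ⟨fun j => aT pm j - aS qm j, cT pm - cS qm, ?_⟩
    intro y hycl
    have h1 : hpl y = T pm y - S qm y := by
      rw [hhdef]
      simp only
      rw [hmaxT_eqU hycl, hmaxS_eqU hycl]
    rw [h1]
    simp only [hTdef, hSdef, sub_mul, Finset.sum_sub_distrib]
    ring
  · -- approximation bound
    intro x hx
    clear_value hpl q C B
    have h1 := hmaxT_le x hx
    have h2 := hmaxS_le x
    have h3 := (hmax_ge x hx).1
    have h4 := (hmax_ge x hx).2
    have hgh : |g x - hpl x| ≤ B / (N:ℝ)^2 := by
      rw [hhdef, abs_le]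
      constructor
      · simp only; linarith
      · simp only; linarith
    have h5 := hfg x hx
    calc |f x - hpl x| ≤ |f x - g x| + |g x - hpl x| := abs_sub_le _ _ _
      _ < ε/3 + ε/3 := by
          apply add_lt_add_of_lt_of_le h5
          linarith
      _ < ε := by linarith
end

section
/- Let n ≥ 2 and let g₁, g₂ : ℝⁿ → ℝ be affine functionals whose linear parts are nonzero and not proportional to each other. Define the four regions R₁ = {g₁ ≤ 0, g₂ ≤ 0}, R₂ = {g₁ ≥ 0, g₂ ≤ 0}, R₃ = {g₁ ≥ 0, g₂ ≥ 0}, R₄ = {g₁ ≤ 0, g₂ ≥ 0}. Suppose f, f′ : ℝⁿ → ℝ are continuous functions each of which is affine on each of R₁, R₂, R₃, R₄. If f = f′ on R₁ ∪ R₂ ∪ R₃, then f = f′ on all of ℝⁿ. That is, the affine piece on the fourth region is uniquely determined by the pieces on the other three (continuity restriction). -/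
/-!
On the fourth quadrant `g₁ ≤ 0 ≤ g₂` both functions are affine, so their difference `d` is the
restriction of an affine function; `d` vanishes on the two boundary rays of the quadrant, which lie
in the other three regions. Since the normals are linearly independent there are `u, v` with
`w₁ ⬝ᵥ u = 1, w₂ ⬝ᵥ u = 0, w₁ ⬝ᵥ v = 0, w₂ ⬝ᵥ v = 1`, and every point `x` of the quadrant is the
affine combination `p + q - r` of the boundary points `p = x - g₁(x) • u`, `q = x - g₂(x) • v`,
`r = p - g₂(x) • v`. Hence `d x = d p + d q - d r = 0`.
-/

open Matrix

section
variable {ι K : Type*} [Fintype ι]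

theorem exists_dotProduct_eq_of_linearIndependent [Field K] {w₁ w₂ : ι → K}
    (h : LinearIndependent K ![w₁, w₂]) (c₁ c₂ : K) :
    ∃ u, w₁ ⬝ᵥ u = c₁ ∧ w₂ ⬝ᵥ u = c₂ := by
  set M := Matrix.of ![w₁, w₂]
  have hrank : M.rank = 2 := by simpa using h.rank_matrix (M := M)
  have hsurj : Function.Surjective M.mulVecLin := by
    rw [← LinearMap.range_eq_top]
    apply Submodule.eq_top_of_finrank_eq
    rw [← Matrix.rank, hrank, Module.finrank_fin_fun]
  obtain ⟨u, hu⟩ := hsurj ![c₁, c₂]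
  exact ⟨u, congrFun hu 0, congrFun hu 1⟩

variable [Field K] [LinearOrder K] [IsStrictOrderedRing K]

theorem dotProduct_add_eq_zero_of_eq_zero_on_boundary
    {w₁ w₂ u v a : ι → K} {b₁ b₂ c : K}
    (hu₁ : w₁ ⬝ᵥ u = 1) (hu₂ : w₂ ⬝ᵥ u = 0) (hv₁ : w₁ ⬝ᵥ v = 0) (hv₂ : w₂ ⬝ᵥ v = 1)
    (hzero₁ : ∀ y, w₁ ⬝ᵥ y + b₁ = 0 → 0 ≤ w₂ ⬝ᵥ y + b₂ → a ⬝ᵥ y + c = 0)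
    (hzero₂ : ∀ y, w₁ ⬝ᵥ y + b₁ ≤ 0 → w₂ ⬝ᵥ y + b₂ = 0 → a ⬝ᵥ y + c = 0)
    {x : ι → K} (hx₁ : w₁ ⬝ᵥ x + b₁ ≤ 0) (hx₂ : 0 ≤ w₂ ⬝ᵥ x + b₂) :
    a ⬝ᵥ x + c = 0 := by
  set s := w₁ ⬝ᵥ x + b₁
  set t := w₂ ⬝ᵥ x + b₂
  set p := x - s • u
  set q := x - t • v
  set r := p - t • v
  have hp : a ⬝ᵥ p + c = 0 := hzero₁ p
    (by simp only [p, dotProduct_sub, dotProduct_smul, hu₁, smul_eq_mul]; ring)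
    (by simpa only [p, dotProduct_sub, dotProduct_smul, hu₂, smul_zero, sub_zero] using hx₂)
  have hq : a ⬝ᵥ q + c = 0 := hzero₂ q
    (by simpa only [q, dotProduct_sub, dotProduct_smul, hv₁, smul_zero, sub_zero] using hx₁)
    (by simp only [q, dotProduct_sub, dotProduct_smul, hv₂, smul_eq_mul]; ring)
  have hr : a ⬝ᵥ r + c = 0 := hzero₂ r
    (by simp only [r, p, dotProduct_sub, dotProduct_smul, hu₁, hv₁, smul_eq_mul]; linarith)
    (by simp only [r, p, dotProduct_sub, dotProduct_smul, hu₂, hv₂, smul_eq_mul]; ring)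
  have hx : x = p + q - r := by simp only [p, q, r]; abel
  calc a ⬝ᵥ x + c = (a ⬝ᵥ p + c) + (a ⬝ᵥ q + c) - (a ⬝ᵥ r + c) := by
        rw [hx, dotProduct_sub, dotProduct_add]; ring
    _ = 0 := by rw [hp, hq, hr]; ring

end

open Set

theorem continuity_restriction_four_regions_general
    (n : ℕ)
    (w₁ w₂ : Fin n → ℝ) (b₁ b₂ : ℝ)
    (hind : LinearIndependent ℝ ![w₁, w₂])
    (f f' : (Fin n → ℝ) → ℝ)
    (hpw : ∀ F ∈ ({f, f'} : Set ((Fin n → ℝ) → ℝ)),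
      ∀ e₁ ∈ ({-1, 1} : Set ℝ), ∀ e₂ ∈ ({-1, 1} : Set ℝ),
      ∃ (a : Fin n → ℝ) (c : ℝ), ∀ x : Fin n → ℝ,
        0 ≤ e₁ * ((∑ j, w₁ j * x j) + b₁) → 0 ≤ e₂ * ((∑ j, w₂ j * x j) + b₂) →
        F x = (∑ j, a j * x j) + c)
    (hagree : ∀ x : Fin n → ℝ,
      (((∑ j, w₁ j * x j) + b₁ ≤ 0 ∧ (∑ j, w₂ j * x j) + b₂ ≤ 0) ∨
       (0 ≤ (∑ j, w₁ j * x j) + b₁ ∧ (∑ j, w₂ j * x j) + b₂ ≤ 0) ∨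
       (0 ≤ (∑ j, w₁ j * x j) + b₁ ∧ 0 ≤ (∑ j, w₂ j * x j) + b₂)) →
      f x = f' x) :
    ∀ x, f x = f' x := by
  have hdot (v y : Fin n → ℝ) : ∑ j, v j * y j = v ⬝ᵥ y := rfl
  simp only [hdot] at hpw hagree
  intro x
  rcases le_total (w₁ ⬝ᵥ x + b₁) 0, le_total (w₂ ⬝ᵥ x + b₂) 0 with ⟨h₁ | h₁, h₂ | h₂⟩
  · exact hagree x (.inl ⟨h₁, h₂⟩)
  · obtain ⟨a, c, hfa⟩ := hpw f (by simp) (-1) (by simp) 1 (by simp)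
    obtain ⟨a', c', hfa'⟩ := hpw f' (by simp) (-1) (by simp) 1 (by simp)
    have hdiff (y) (hy₁ : w₁ ⬝ᵥ y + b₁ ≤ 0) (hy₂ : 0 ≤ w₂ ⬝ᵥ y + b₂) :
        f y - f' y = (a - a') ⬝ᵥ y + (c - c') := by
      rw [hfa y (by linarith) (by linarith), hfa' y (by linarith) (by linarith), sub_dotProduct]
      ring
    obtain ⟨u, hu₁, hu₂⟩ := exists_dotProduct_eq_of_linearIndependent hind 1 0
    obtain ⟨v, hv₁, hv₂⟩ := exists_dotProduct_eq_of_linearIndependent hind 0 1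
    have hzero := dotProduct_add_eq_zero_of_eq_zero_on_boundary hu₁ hu₂ hv₁ hv₂
      (fun y hy₁ hy₂ ↦ by
        rw [← hdiff y hy₁.le hy₂, sub_eq_zero]; exact hagree y (.inr (.inr ⟨hy₁.ge, hy₂⟩)))
      (fun y hy₁ hy₂ ↦ by
        rw [← hdiff y hy₁ hy₂.ge, sub_eq_zero]; exact hagree y (.inl ⟨hy₁, hy₂.le⟩))
      h₁ h₂
    rwa [← hdiff x h₁ h₂, sub_eq_zero] at hzero
  · exact hagree x (.inr (.inl ⟨h₁, h₂⟩))
  · exact hagree x (.inr (.inr ⟨h₁, h₂⟩))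

/-- Continuity restriction: for two continuous functions
that are affine on each of the four regions cut out by two intersecting
hyperplanes with non-proportional linear parts, agreement on three of the four
regions forces agreement everywhere. -/
theorem continuity_restriction_four_regions
    (n : ℕ) (hn : 2 ≤ n)
    (w₁ w₂ : Fin n → ℝ) (b₁ b₂ : ℝ)
    (hind : LinearIndependent ℝ ![w₁, w₂])
    (f f' : (Fin n → ℝ) → ℝ) (hf : Continuous f) (hf' : Continuous f')
    (hpw : ∀ F ∈ ({f, f'} : Set ((Fin n → ℝ) → ℝ)),
      ∀ e₁ ∈ ({-1, 1} : Set ℝ), ∀ e₂ ∈ ({-1, 1} : Set ℝ),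
      ∃ (a : Fin n → ℝ) (c : ℝ), ∀ x : Fin n → ℝ,
        0 ≤ e₁ * ((∑ j, w₁ j * x j) + b₁) → 0 ≤ e₂ * ((∑ j, w₂ j * x j) + b₂) →
        F x = (∑ j, a j * x j) + c)
    (hagree : ∀ x : Fin n → ℝ,
      (((∑ j, w₁ j * x j) + b₁ ≤ 0 ∧ (∑ j, w₂ j * x j) + b₂ ≤ 0) ∨
       (0 ≤ (∑ j, w₁ j * x j) + b₁ ∧ (∑ j, w₂ j * x j) + b₂ ≤ 0) ∨
       (0 ≤ (∑ j, w₁ j * x j) + b₁ ∧ 0 ≤ (∑ j, w₂ j * x j) + b₂)) →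
      f x = f' x) :
    ∀ x, f x = f' x :=
  continuity_restriction_four_regions_general n w₁ w₂ b₁ b₂ hind f f' hpw hagree
end

section
/- Let n ≥ 2 and M ≥ 2. For each multi-index k = (k₁,…,k_n) ∈ {0,1,…,M−1}ⁿ let C_k = Π_{i=1}^{n} [k_i/M, (k_i+1)/M] be the corresponding grid cell of [0,1]ⁿ, and let B = {k ∈ {0,…,M−1}ⁿ : at most one coordinate of k is nonzero} (so |B| = (M−1)·n + 1). Suppose f, g : [0,1]ⁿ → ℝ are continuous functions each of which is affine on every cell C_k. If f = g on C_k for every k ∈ B, then f = g on all of [0,1]ⁿ. -/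
/-!
Let `h = f - g`; it is affine on every cell and vanishes on the cells of `B`. Induct on the cell
`k` in the product order. If `k ∉ B`, two coordinates `i ≠ i'` of `k` are nonzero, so the facets
`x i = k i / M` and `x i' = k i' / M` of `C_k` lie in the smaller cells `k - eᵢ` and `k - eᵢ'`,
where `h` vanishes by induction. The lower corner of `C_k` and its `n` neighbours along the edges
each lie on one of these two facets, and an affine function vanishing at these `n + 1` affinely
independent points is zero.
-/

open Set Function

variable {ι : Type*}

def gridCell (M : ℕ) (k : ι → ℕ) : Set (ι → ℝ) :=
  {x | ∀ i, (k i : ℝ) / M ≤ x i ∧ x i ≤ ((k i : ℝ) + 1) / M}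

def IsAffineOn [Fintype ι] (h : (ι → ℝ) → ℝ) (s : Set (ι → ℝ)) : Prop :=
  ∃ (a : ι → ℝ) (c : ℝ), ∀ x ∈ s, h x = ∑ j, a j * x j + c

lemma IsAffineOn.sub [Fintype ι] {f g : (ι → ℝ) → ℝ} {s : Set (ι → ℝ)} (hf : IsAffineOn f s)
    (hg : IsAffineOn g s) : IsAffineOn (f - g) s := by
  obtain ⟨af, cf, hf⟩ := hf
  obtain ⟨ag, cg, hg⟩ := hg
  refine ⟨af - ag, cf - cg, fun x hx => ?_⟩
  simp only [Pi.sub_apply, hf x hx, hg x hx, sub_mul, Finset.sum_sub_distrib]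
  ring

lemma sum_mul_update [Fintype ι] [DecidableEq ι] (a v : ι → ℝ) (i : ι) (b : ℝ) :
    ∑ j, a j * update v i b j = ∑ j, a j * v j + a i * (b - v i) := by
  simp [update_apply, mul_ite, Finset.sum_ite, Finset.filter_eq', Finset.filter_ne']
  ring

lemma affine_eq_zero_of_vanishes_at_corner_and_neighbors [Fintype ι] [DecidableEq ι]
    {a : ι → ℝ} {c : ℝ} {l u : ι → ℝ} (hlu : ∀ j, l j ≠ u j) (hl : ∑ j, a j * l j + c = 0)
    (hnb : ∀ j, ∑ i, a i * update l j (u j) i + c = 0) : a = 0 ∧ c = 0 := by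
  have ha : a = 0 := funext fun j => by
    have h := hnb j
    rw [sum_mul_update] at h
    exact (mul_eq_zero.mp (by linarith : a j * (u j - l j) = 0)).resolve_right
      (sub_ne_zero.mpr (hlu j).symm)
  subst ha
  simpa using hl

lemma corner_mem_gridCell (M : ℕ) (k : ι → ℕ) : (fun i => (k i : ℝ) / M) ∈ gridCell M k :=
  fun i => ⟨le_rfl, div_le_div_of_nonneg_right (by linarith) (Nat.cast_nonneg M)⟩

lemma update_corner_mem_gridCell [DecidableEq ι] (M : ℕ) (k : ι → ℕ) (j : ι) :
    update (fun i => (k i : ℝ) / M) j (((k j : ℝ) + 1) / M) ∈ gridCell M k := by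
  intro i
  rcases eq_or_ne i j with rfl | hij
  · rw [update_self]
    exact ⟨div_le_div_of_nonneg_right (by linarith) (Nat.cast_nonneg M), le_rfl⟩
  · rw [update_of_ne hij]
    exact corner_mem_gridCell M k i

lemma mem_gridCell_update_pred [DecidableEq ι] {M : ℕ} {k : ι → ℕ} {x : ι → ℝ}
    (hx : x ∈ gridCell M k) {m : ι} (hkm : k m ≠ 0) (hxm : x m = k m / M) :
    x ∈ gridCell M (update k m (k m - 1)) := by
  intro i
  rcases eq_or_ne i m with rfl | him
  · rw [update_self, Nat.cast_pred (Nat.pos_of_ne_zero hkm), hxm, sub_add_cancel]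
    exact ⟨div_le_div_of_nonneg_right (by linarith) (Nat.cast_nonneg M), le_rfl⟩
  · rw [update_of_ne him]
    exact hx i

theorem eq_zero_on_gridCell_of_eq_zero_on_boundary [Fintype ι] [DecidableEq ι] {M : ℕ}
    {h : (ι → ℝ) → ℝ} (haff : ∀ k : ι → ℕ, (∀ i, k i < M) → IsAffineOn h (gridCell M k))
    (hbd : ∀ k : ι → ℕ, (∀ i, k i < M) → (∀ i j, i ≠ j → k i = 0 ∨ k j = 0) →
      ∀ x ∈ gridCell M k, h x = 0)
    (k : ι → ℕ) (hk : ∀ i, k i < M) : ∀ x ∈ gridCell M k, h x = 0 := by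
  induction k using WellFoundedLT.induction with
  | _ k ih =>
  by_cases hB : ∀ i j, i ≠ j → k i = 0 ∨ k j = 0
  · exact hbd k hk hB
  push Not at hB
  obtain ⟨i, i', hii', hki, hki'⟩ := hB
  have hM : (0 : ℝ) < M := by exact_mod_cast (Nat.zero_le _).trans_lt (hk i)
  have hfacet : ∀ m x, k m ≠ 0 → x ∈ gridCell M k → x m = k m / M → h x = 0 := by
    intro m x hkm hx hxm
    have hlt : update k m (k m - 1) < k := update_lt_self_iff.mpr (Nat.sub_one_lt hkm)
    exact ih _ hlt (fun j => (hlt.le j).trans_lt (hk j)) x (mem_gridCell_update_pred hx hkm hxm)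
  obtain ⟨a, c, hac⟩ := haff k hk
  obtain ⟨rfl, rfl⟩ : a = 0 ∧ c = 0 := by
    refine affine_eq_zero_of_vanishes_at_corner_and_neighbors (u := fun j => ((k j : ℝ) + 1) / M)
      (fun j => (div_lt_div_of_pos_right (lt_add_one _) hM).ne) ?_ fun j => ?_
    · rw [← hac _ (corner_mem_gridCell M k)]
      exact hfacet i _ hki (corner_mem_gridCell M k) rfl
    · rw [← hac _ (update_corner_mem_gridCell M k j)]
      -- the neighbour along edge `j` differs from the corner only in coordinate `j`
      obtain ⟨m, hmj, hkm⟩ : ∃ m, m ≠ j ∧ k m ≠ 0 := by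
        rcases eq_or_ne i j with rfl | hij
        exacts [⟨i', hii'.symm, hki'⟩, ⟨i, hij, hki⟩]
      exact hfacet m _ hkm (update_corner_mem_gridCell M k j) (update_of_ne hmj ..)
  intro x hx
  simpa using hac x hx

lemma exists_nat_div_le_le_succ_div {M : ℕ} (hM : 0 < M) {t : ℝ} (ht₀ : 0 ≤ t) (ht₁ : t ≤ 1) :
    ∃ m < M, (m : ℝ) / M ≤ t ∧ t ≤ ((m : ℝ) + 1) / M := by
  have hM' : (0 : ℝ) < M := by exact_mod_cast hM
  rcases ht₁.lt_or_eq with ht | rfl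
  · have hMt : 0 ≤ (M : ℝ) * t := by positivity
    refine ⟨⌊(M : ℝ) * t⌋₊, (Nat.floor_lt hMt).mpr (by nlinarith), ?_, ?_⟩
    · rw [div_le_iff₀' hM']
      exact Nat.floor_le hMt
    · rw [le_div_iff₀' hM']
      exact (Nat.lt_floor_add_one _).le
  · refine ⟨M - 1, Nat.sub_one_lt hM.ne', ?_, ?_⟩
    · rw [div_le_one hM']
      exact_mod_cast Nat.sub_le M 1
    · rw [Nat.cast_pred hM, sub_add_cancel, div_self hM'.ne']

lemma exists_gridCell_mem {M : ℕ} (hM : 0 < M) {x : ι → ℝ} (hx : x ∈ Icc 0 1) :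
    ∃ k : ι → ℕ, (∀ i, k i < M) ∧ x ∈ gridCell M k := by
  choose k hkM hxk using fun i => exists_nat_div_le_le_succ_div hM (hx.1 i) (hx.2 i)
  exact ⟨k, hkM, fun i => hxk i⟩

theorem grid_boundary_determination_general
    (n M : ℕ) (hM : 2 ≤ M)
    (f g : (Fin n → ℝ) → ℝ)
    (hfa : ∀ k : Fin n → ℕ, (∀ i, k i < M) →
      ∃ (a : Fin n → ℝ) (c : ℝ), ∀ x : Fin n → ℝ,
        (∀ i, (k i : ℝ) / M ≤ x i ∧ x i ≤ ((k i : ℝ) + 1) / M) →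
        f x = (∑ j, a j * x j) + c)
    (hga : ∀ k : Fin n → ℕ, (∀ i, k i < M) →
      ∃ (a : Fin n → ℝ) (c : ℝ), ∀ x : Fin n → ℝ,
        (∀ i, (k i : ℝ) / M ≤ x i ∧ x i ≤ ((k i : ℝ) + 1) / M) →
        g x = (∑ j, a j * x j) + c)
    (hbd : ∀ k : Fin n → ℕ, (∀ i, k i < M) →
      (∀ i j, i ≠ j → k i = 0 ∨ k j = 0) →
      ∀ x : Fin n → ℝ,
        (∀ i, (k i : ℝ) / M ≤ x i ∧ x i ≤ ((k i : ℝ) + 1) / M) → f x = g x) :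
    ∀ x ∈ Icc (0 : Fin n → ℝ) 1, f x = g x := by
  intro x hx
  obtain ⟨k, hk, hxk⟩ := exists_gridCell_mem (by omega : 0 < M) hx
  have hzero := eq_zero_on_gridCell_of_eq_zero_on_boundary (h := f - g)
    (fun k hk => IsAffineOn.sub (hfa k hk) (hga k hk))
    (fun k hk hB x hx => sub_eq_zero.mpr (hbd k hk hB x hx)) k hk x hxk
  exact sub_eq_zero.mp hzero

/-- Boundary determination on the standard grid: two
continuous functions on `[0,1]ⁿ`, each affine on every grid cell of mesh
`1/M`, that agree on all cells whose multi-index has at most one nonzero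
coordinate, agree on all of `[0,1]ⁿ`. -/
theorem grid_boundary_determination
    (n M : ℕ) (hn : 2 ≤ n) (hM : 2 ≤ M)
    (f g : (Fin n → ℝ) → ℝ)
    (hfc : ContinuousOn f (Icc 0 1)) (hgc : ContinuousOn g (Icc 0 1))
    (hfa : ∀ k : Fin n → ℕ, (∀ i, k i < M) →
      ∃ (a : Fin n → ℝ) (c : ℝ), ∀ x : Fin n → ℝ,
        (∀ i, (k i : ℝ) / M ≤ x i ∧ x i ≤ ((k i : ℝ) + 1) / M) →
        f x = (∑ j, a j * x j) + c)
    (hga : ∀ k : Fin n → ℕ, (∀ i, k i < M) →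
      ∃ (a : Fin n → ℝ) (c : ℝ), ∀ x : Fin n → ℝ,
        (∀ i, (k i : ℝ) / M ≤ x i ∧ x i ≤ ((k i : ℝ) + 1) / M) →
        g x = (∑ j, a j * x j) + c)
    (hbd : ∀ k : Fin n → ℕ, (∀ i, k i < M) →
      (∀ i j, i ≠ j → k i = 0 ∨ k j = 0) →
      ∀ x : Fin n → ℝ,
        (∀ i, (k i : ℝ) / M ≤ x i ∧ x i ≤ ((k i : ℝ) + 1) / M) → f x = g x) :
    ∀ x ∈ Icc (0 : Fin n → ℝ) 1, f x = g x :=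
  grid_boundary_determination_general n M hM f g hfa hga hbd
end
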